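/- arXiv:1110.6011 — 4 statements merged into one kernel-verified Lean document; each statement's English description precedes it below -/
import Mathlib

section
/- Entropy maximization with boundary constraints: Let M be a positive integer, 0 < epsilon < 1/(2M), and n in {0,...,M-1}. Over the set Delta of all tuples (q_1,...,q_{M-n}, p_1,...,p_n) with q_j >= 0, 0 <= p_i <= epsilon, and sum_j q_j = 1 - sum_i p_i, the maximum of the entropy H(q_1,...,q_{M-n},p_1,...,p_n) = sum_j q_j log(1/q_j) + sum_i p_i log(1/p_i) equals (1 - n*epsilon) * log((M-n)/(1 - n*epsilon)) + n*epsilon*log(1/epsilon). -/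
open Finset

lemma gibbs_aux {ι : Type*} [Fintype ι] (a b : ι → ℝ) (ha : ∀ i, 0 ≤ a i)
    (hb : ∀ i, 0 < b i) (hab : ∑ i, a i = ∑ i, b i) :
    ∑ i, a i * Real.logb 2 (1 / a i) ≤ ∑ i, a i * Real.logb 2 (1 / b i) := by
  have hlog2 : (0:ℝ) < Real.log 2 := Real.log_pos (by norm_num)
  have key : ∀ i, a i * Real.logb 2 (1 / a i) ≤
      a i * Real.logb 2 (1 / b i) + (b i - a i) / Real.log 2 := by
    intro i
    rcases eq_or_lt_of_le (ha i) with h | h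
    · rw [← h]
      simp
      exact div_nonneg (hb i).le hlog2.le
    · have hdiff : Real.logb 2 (1 / a i) - Real.logb 2 (1 / b i)
          = Real.logb 2 (b i / a i) := by
        rw [← Real.logb_div (one_div_ne_zero h.ne') (one_div_ne_zero (hb i).ne')]
        congr 1
        field_simp
      have hle : Real.logb 2 (b i / a i) ≤ (b i / a i - 1) / Real.log 2 := by
        rw [Real.logb, div_le_div_iff_of_pos_right hlog2]
        exact Real.log_le_sub_one_of_pos (div_pos (hb i) h)
      have h2 := mul_le_mul_of_nonneg_left hle h.le
      have heq : a i * ((b i / a i - 1) / Real.log 2) = (b i - a i) / Real.log 2 := by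
        field_simp
      have h3 : a i * Real.logb 2 (b i / a i) ≤ (b i - a i) / Real.log 2 :=
        heq ▸ h2
      have h4 : a i * Real.logb 2 (1 / a i) - a i * Real.logb 2 (1 / b i)
          = a i * Real.logb 2 (b i / a i) := by rw [← hdiff]; ring
      linarith
  calc ∑ i, a i * Real.logb 2 (1 / a i)
      ≤ ∑ i, (a i * Real.logb 2 (1 / b i) + (b i - a i) / Real.log 2) :=
        Finset.sum_le_sum fun i _ => key i
    _ = ∑ i, a i * Real.logb 2 (1 / b i) + (∑ i, b i - ∑ i, a i) / Real.log 2 := by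
        rw [Finset.sum_add_distrib]
        congr 1
        rw [← Finset.sum_div, Finset.sum_sub_distrib]
    _ = ∑ i, a i * Real.logb 2 (1 / b i) := by rw [hab]; simp

/-- **Entropy maximization with boundary constraints.** For `M ≥ 1`,
`0 < ε < 1/(2M)` and `0 ≤ n ≤ M-1`, the maximum of the entropy
`H(q₁,…,q_{M-n},p₁,…,p_n) = ∑ qⱼ log(1/qⱼ) + ∑ pᵢ log(1/pᵢ)` over all tuples
with `qⱼ ≥ 0`, `0 ≤ pᵢ ≤ ε` and `∑ qⱼ = 1 - ∑ pᵢ`, equals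
`(1 - nε) log((M-n)/(1-nε)) + nε log(1/ε)`. Logs are base 2. -/
theorem entropy_maximization_boundary (M n : ℕ) (hM : 0 < M) (hn : n ≤ M - 1)
    (ε : ℝ) (hε : 0 < ε) (hεM : ε < 1 / (2 * M)) :
    IsGreatest
      { h : ℝ | ∃ (q : Fin (M - n) → ℝ) (p : Fin n → ℝ),
          (∀ j, 0 ≤ q j) ∧ (∀ i, 0 ≤ p i ∧ p i ≤ ε) ∧
          (∑ j, q j = 1 - ∑ i, p i) ∧
          h = ∑ j, q j * Real.logb 2 (1 / q j)
              + ∑ i, p i * Real.logb 2 (1 / p i) }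
      ((1 - n * ε) * Real.logb 2 ((M - n) / (1 - n * ε))
        + n * ε * Real.logb 2 (1 / ε)) := by
  have hnM : n < M := by omega
  have hM' : (0:ℝ) < M := by exact_mod_cast hM
  have hc1 : (1:ℝ) ≤ (M:ℝ) - n := by
    have : (n:ℝ) + 1 ≤ M := by exact_mod_cast hnM
    linarith
  have hc0 : (0:ℝ) < (M:ℝ) - n := by linarith
  have hMhalf : (M:ℝ) * (1/(2*M)) = 1/2 := by field_simp
  have hMε : (M:ℝ) * ε < 1/2 := by
    have := mul_lt_mul_of_pos_left hεM hM'
    linarith [this, hMhalf]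
  have hnε : (n:ℝ) * ε < 1/2 := by
    have hle : (n:ℝ) ≤ M := by exact_mod_cast hnM.le
    nlinarith
  have h1 : (0:ℝ) < 1 - n * ε := by linarith
  have hcard : ((M - n : ℕ) : ℝ) = (M:ℝ) - n := by
    rw [Nat.cast_sub hnM.le]
  -- value of constant sums
  set c : ℝ := (M:ℝ) - n with hc
  set A : ℝ := c / (1 - n * ε) with hA
  have hA0 : 0 < A := by positivity
  -- key inequality: A ≤ 1/ε
  have hAε : A ≤ 1 / ε := by
    rw [hA, div_le_div_iff₀ h1 hε]
    have hle : (n:ℝ) ≥ 0 := Nat.cast_nonneg n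
    nlinarith
  have hlogA : Real.logb 2 A ≤ Real.logb 2 (1 / ε) :=
    Real.logb_le_logb_of_le (by norm_num) hA0 hAε
  constructor
  · -- membership
    refine ⟨fun _ => (1 - n * ε) / c, fun _ => ε, fun _ => by positivity,
      fun _ => ⟨hε.le, le_refl ε⟩, ?_, ?_⟩
    · rw [Finset.sum_const, Finset.sum_const, card_univ, card_univ,
        Fintype.card_fin, Fintype.card_fin, nsmul_eq_mul, nsmul_eq_mul, hcard]
      have : c * ((1 - n * ε) / c) = 1 - n * ε := by field_simp
      rw [this]
    · rw [Finset.sum_const, Finset.sum_const, card_univ, card_univ,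
        Fintype.card_fin, Fintype.card_fin, nsmul_eq_mul, nsmul_eq_mul, hcard,
        one_div_div]
      generalize Real.logb 2 (c / (1 - ↑n * ε)) = X
      generalize Real.logb 2 (1 / ε) = Y
      field_simp
  · -- upper bound
    rintro h ⟨q, p, hq, hp, hsum, rfl⟩
    set s : ℝ := ∑ i, p i with hs
    have hs0 : 0 ≤ s := Finset.sum_nonneg fun i _ => (hp i).1
    have hsε : s ≤ n * ε := by
      calc s ≤ ∑ _i : Fin n, ε := Finset.sum_le_sum fun i _ => (hp i).2
        _ = n * ε := by
          rw [Finset.sum_const, card_univ, Fintype.card_fin, nsmul_eq_mul]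
    -- Gibbs with combined distribution
    have hgibbs := gibbs_aux (ι := Fin (M - n) ⊕ Fin n)
      (Sum.elim q p) (Sum.elim (fun _ => (1 - n * ε) / c) (fun _ => ε))
      (by rintro (j | i); exacts [hq j, (hp i).1])
      (by rintro (j | i); exacts [div_pos h1 hc0, hε])
      (by
        rw [Fintype.sum_sum_type, Fintype.sum_sum_type]
        simp only [Sum.elim_inl, Sum.elim_inr]
        rw [hsum, ← hs, Finset.sum_const, Finset.sum_const, card_univ, card_univ,
          Fintype.card_fin, Fintype.card_fin, nsmul_eq_mul, nsmul_eq_mul, hcard]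
        have : c * ((1 - n * ε) / c) = 1 - n * ε := by field_simp
        rw [this]; ring)
    rw [Fintype.sum_sum_type, Fintype.sum_sum_type] at hgibbs
    simp only [Sum.elim_inl, Sum.elim_inr] at hgibbs
    have hrhs : ∑ j, q j * Real.logb 2 (1 / ((1 - n * ε) / c))
        + ∑ i, p i * Real.logb 2 (1 / ε)
        = (1 - s) * Real.logb 2 A + s * Real.logb 2 (1 / ε) := by
      rw [← Finset.sum_mul, ← Finset.sum_mul, hsum, ← hs, one_div_div]
    rw [hrhs] at hgibbs
    refine le_trans hgibbs ?_
    have hfinal : (1 - s) * Real.logb 2 A + s * Real.logb 2 (1 / ε)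
        ≤ (1 - n * ε) * Real.logb 2 A + n * ε * Real.logb 2 (1 / ε) := by
      nlinarith [mul_nonneg (sub_nonneg.2 hsε) (sub_nonneg.2 hlogA)]
    exact hfinal
end

section
/- Abundance of dyadic doubling scales: Let a be a positive integer, 0 < p < 1, and set c = 2^{-2ad/(1-p)}. Let mu be a finite Borel measure on [0,1)^d. Then for mu-almost every x in R^d, liminf_{N -> infinity} (1/N) * card{ k in [N] : mu(Q^{k+a,x}) >= c * mu(Q^{k,x}) } >= p. -/
open MeasureTheory Filter
open scoped ENNReal Classical

/-- The half-open dyadic cube of generation `k` (side length `2^{-k}`)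
containing the point `x ∈ ℝ^d`. -/
def dyadicCube (d k : ℕ) (x : Fin d → ℝ) : Set (Fin d → ℝ) :=
  {y | ∀ i, ⌊(2 : ℝ) ^ k * y i⌋ = ⌊(2 : ℝ) ^ k * x i⌋}

lemma myFloorDiv (r : ℝ) (n : ℕ) (hn : 0 < n) : ⌊r / (n:ℝ)⌋ = ⌊r⌋ / (n:ℤ) := by
  have hn' : (0:ℝ) < (n:ℝ) := by exact_mod_cast hn
  have hnz : (n:ℤ) ≠ 0 := by exact_mod_cast hn.ne'
  set q : ℤ := ⌊r⌋ / (n:ℤ) with hq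
  have hdm : (n:ℤ) * q + ⌊r⌋ % n = ⌊r⌋ := Int.mul_ediv_add_emod _ _
  have hs0 : 0 ≤ ⌊r⌋ % (n:ℤ) := Int.emod_nonneg _ hnz
  have hs1 : ⌊r⌋ % (n:ℤ) < n := Int.emod_lt_of_pos _ (by exact_mod_cast hn)
  have hle : (n:ℤ) * q ≤ ⌊r⌋ := by omega
  have hlt : ⌊r⌋ + 1 ≤ (n:ℤ) * q + n := by omega
  rw [Int.floor_eq_iff]
  constructor
  · rw [le_div_iff₀ hn']
    have h1 : ((n:ℤ) * q : ℝ) ≤ ((⌊r⌋ : ℤ) : ℝ) := by exact_mod_cast hle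
    have := Int.floor_le r
    push_cast at h1 ⊢
    linarith
  · rw [div_lt_iff₀ hn']
    have h1 : (((⌊r⌋:ℤ) + 1 : ℤ) : ℝ) ≤ (((n:ℤ) * q + n : ℤ) : ℝ) := by exact_mod_cast hlt
    have := Int.lt_floor_add_one r
    push_cast at h1 ⊢
    linarith

lemma dyadicCube_antitone {d : ℕ} (x : Fin d → ℝ) {k m : ℕ} (h : k ≤ m) :
    dyadicCube d m x ⊆ dyadicCube d k x := by
  intro y hy i
  have key : ∀ t : ℝ, ⌊(2:ℝ) ^ k * t⌋ = ⌊(2:ℝ) ^ m * t⌋ / ((2 ^ (m - k) : ℕ) : ℤ) := by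
    intro t
    have h2 : (2:ℝ) ^ k * t = ((2:ℝ) ^ m * t) / ((2 ^ (m-k) : ℕ) : ℝ) := by
      rw [Nat.cast_pow, Nat.cast_ofNat, eq_div_iff (by positivity)]
      rw [mul_right_comm, ← pow_add]
      congr 2
      omega
    rw [h2, myFloorDiv _ _ (by positivity)]
  rw [key, key, hy i]

lemma key_bound {d : ℕ} (a : ℕ) (ha : 0 < a) (μ : Measure (Fin d → ℝ)) [IsFiniteMeasure μ]
    (x : Fin d → ℝ) (C : ℝ≥0∞) (hC : C ≠ ⊤) (N : ℕ) :
    μ (dyadicCube d (N + a) x) ^ a ≤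
      C ^ ((Finset.Icc 1 N).filter fun k =>
          ¬ C * μ (dyadicCube d k x) ≤ μ (dyadicCube d (k + a) x)).card *
        μ Set.univ ^ a := by
  set f : ℕ → ℝ≥0∞ := fun j => μ (dyadicCube d j x) with hf
  set g : ℕ → ℝ≥0∞ := fun n => ∏ j ∈ Finset.Ioc n (n + a), f j with hg
  have hmono : ∀ {i j : ℕ}, i ≤ j → f j ≤ f i := fun h =>
    measure_mono (dyadicCube_antitone x h)
  have hfin : ∀ j, f j ≠ ⊤ := fun j => measure_ne_top μ _
  set b : ℕ → ℕ := fun n => ((Finset.Icc 1 n).filter fun k =>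
      ¬ C * μ (dyadicCube d k x) ≤ μ (dyadicCube d (k + a) x)).card with hb
  have main : ∀ n, g n ≤ C ^ (b n) * g 0 := by
    intro n
    induction n with
    | zero =>
      simp [hb]
    | succ n ih =>
      have hbsucc : Finset.Icc 1 (n+1) = insert (n+1) (Finset.Icc 1 n) := by
        ext j; simp [Finset.mem_Icc, Finset.mem_insert]; omega
      have hIoc : Finset.Ioc n (n + 1 + a) = insert (n+1) (Finset.Ioc (n+1) (n+1+a)) := by
        ext j; simp [Finset.mem_Ioc, Finset.mem_insert]
      have hIoc2 : Finset.Ioc n (n + 1 + a) = insert (n+1+a) (Finset.Ioc n (n+a)) := by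
        ext j; simp [Finset.mem_Ioc, Finset.mem_insert]; omega
      have hnm1 : (n+1) ∉ Finset.Ioc (n+1) (n+1+a) := by simp
      have hnm2 : (n+1+a) ∉ Finset.Ioc n (n+a) := by simp [Finset.mem_Ioc]
      have hident : g (n+1) * f (n+1) = g n * f (n+1+a) := by
        have e1 : g (n+1) * f (n+1) = ∏ j ∈ Finset.Ioc n (n+1+a), f j := by
          rw [hIoc, Finset.prod_insert hnm1, mul_comm]
        have e2 : g n * f (n+1+a) = ∏ j ∈ Finset.Ioc n (n+1+a), f j := by
          have : (fun n => ∏ j ∈ Finset.Ioc n (n + a), f j) n = ∏ j ∈ Finset.Ioc n (n+a), f j := rfl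
          rw [hIoc2, Finset.prod_insert hnm2, mul_comm]
        rw [e1, e2]
      by_cases hz : f (n+1) = 0
      · have hz2 : f (n+1+a) = 0 := le_antisymm ((hmono (by omega : n+1 ≤ n+1+a)).trans hz.le) zero_le
        have hgz : g (n+1) = 0 := by
          refine Finset.prod_eq_zero (i := n+1+a) ?_ hz2
          simp [Finset.mem_Ioc]; omega
        simp [hgz]
      · by_cases hbad : C * f (n+1) ≤ f (n+1+a)
        · -- good scale
          have hstep : g (n+1) ≤ g n := by
            have hfb : f (n+1+a) ≤ f (n+1) := hmono (by omega)
            have h1 : g (n+1) * f (n+1) ≤ g n * f (n+1) :=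
              hident.le.trans (mul_le_mul_right hfb (g n))
            exact (ENNReal.mul_le_mul_iff_left hz (hfin _)).mp h1
          have hbeq : b (n+1) = b n := by
            rw [hb]
            simp only
            rw [hbsucc, Finset.filter_insert, if_neg (not_not_intro hbad)]
          rw [hbeq]
          exact hstep.trans ih
        · -- bad scale
          have hstep : g (n+1) ≤ C * g n := by
            have hfb : f (n+1+a) ≤ C * f (n+1) := (not_le.mp hbad).le
            have h1 : g (n+1) * f (n+1) ≤ (C * g n) * f (n+1) := by
              rw [hident]
              calc g n * f (n+1+a) ≤ g n * (C * f (n+1)) := mul_le_mul_right hfb (g n)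
                _ = (C * g n) * f (n+1) := by ring
            exact (ENNReal.mul_le_mul_iff_left hz (hfin _)).mp h1
          have hbeq : b (n+1) = b n + 1 := by
            rw [hb]
            simp only
            rw [hbsucc, Finset.filter_insert, if_pos hbad,
              Finset.card_insert_of_notMem (by simp)]
          rw [hbeq]
          calc g (n+1) ≤ C * g n := hstep
            _ ≤ C * (C ^ (b n) * g 0) := mul_le_mul_right ih _
            _ = C ^ (b n + 1) * g 0 := by rw [pow_succ]; ring
  -- conclude
  have h1 : f (N + a) ^ a ≤ g N := by
    calc f (N+a) ^ a = f (N+a) ^ (Finset.Ioc N (N+a)).card := by simp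
      _ ≤ ∏ j ∈ Finset.Ioc N (N+a), f j :=
          Finset.pow_card_le_prod _ _ _ (fun j hj => hmono (Finset.mem_Ioc.mp hj).2)
      _ = g N := rfl
  have h2 : g 0 ≤ μ Set.univ ^ a := by
    calc g 0 = ∏ j ∈ Finset.Ioc 0 (0+a), f j := rfl
      _ ≤ μ Set.univ ^ (Finset.Ioc 0 (0+a)).card :=
          Finset.prod_le_pow_card _ _ _ (fun j hj => measure_mono (Set.subset_univ _))
      _ = μ Set.univ ^ a := by simp
  calc f (N+a) ^ a ≤ g N := h1
    _ ≤ C ^ (b N) * g 0 := main N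
    _ ≤ C ^ (b N) * μ Set.univ ^ a := mul_le_mul_right h2 _

lemma ae_lower {d : ℕ} (μ : Measure (Fin d → ℝ)) [IsFiniteMeasure μ]
    (hsupp : μ {x | ¬ ∀ i, x i ∈ Set.Ico (0 : ℝ) 1} = 0) :
    ∀ᵐ x ∂μ, ∀ᶠ M : ℕ in atTop,
      ENNReal.ofReal ((2:ℝ) ^ (-(M:ℝ) * (d + 2⁻¹))) ≤ μ (dyadicCube d M x) := by
  set t : ℕ → ℝ≥0∞ := fun M => ENNReal.ofReal ((2:ℝ) ^ (-(M:ℝ) * (d + 2⁻¹))) with ht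
  set S : ℕ → Set (Fin d → ℝ) := fun M =>
    {x | (∀ i, x i ∈ Set.Ico (0:ℝ) 1) ∧ μ (dyadicCube d M x) < t M} with hS
  have hmeas : ∀ M, μ (S M) ≤ ENNReal.ofReal (((2:ℝ) ^ (-(2:ℝ)⁻¹)) ^ M) := by
    intro M
    set F : Finset (Fin d → ℤ) :=
      Fintype.piFinset (fun _ : Fin d => Finset.Ico (0:ℤ) (2 ^ M)) with hF
    have hcover : S M ⊆ ⋃ n ∈ F, (S M ∩ {y | ∀ i, ⌊(2:ℝ)^M * y i⌋ = n i}) := by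
      intro x hx
      have hmem : (fun i => ⌊(2:ℝ)^M * x i⌋) ∈ F := by
        rw [hF, Fintype.mem_piFinset]
        intro i
        have h0 : (0:ℝ) ≤ x i := (hx.1 i).1
        have h1 : x i < 1 := (hx.1 i).2
        have hp : (0:ℝ) < 2 ^ M := by positivity
        rw [Finset.mem_Ico]
        refine ⟨Int.floor_nonneg.mpr (by positivity), ?_⟩
        rw [Int.floor_lt]
        push_cast
        nlinarith
      exact Set.mem_biUnion hmem ⟨hx, fun i => rfl⟩
    have hpiece : ∀ n ∈ F, μ (S M ∩ {y | ∀ i, ⌊(2:ℝ)^M * y i⌋ = n i}) ≤ t M := by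
      intro n _
      rcases Set.eq_empty_or_nonempty (S M ∩ {y | ∀ i, ⌊(2:ℝ)^M * y i⌋ = n i}) with he | ⟨x₀, hx₀⟩
      · simp [he]
      · have hsub : S M ∩ {y | ∀ i, ⌊(2:ℝ)^M * y i⌋ = n i} ⊆ dyadicCube d M x₀ := by
          intro y hy i
          rw [hy.2 i, ← hx₀.2 i]
        exact (measure_mono hsub).trans hx₀.1.2.le
    have hcard : F.card = 2 ^ (M * d) := by
      rw [hF, Fintype.card_piFinset]
      have h1 : ((2:ℤ) ^ M - 0).toNat = 2 ^ M := by
        rw [sub_zero]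
        have : ((2:ℤ)^M) = ((2^M : ℕ) : ℤ) := by push_cast; ring
        rw [this, Int.toNat_natCast]
      simp only [Int.card_Ico, h1, Finset.prod_const, Finset.card_univ, Fintype.card_fin]
      rw [← pow_mul]
    calc μ (S M) ≤ ∑ n ∈ F, μ (S M ∩ {y | ∀ i, ⌊(2:ℝ)^M * y i⌋ = n i}) :=
          (measure_mono hcover).trans (measure_biUnion_finset_le _ _)
      _ ≤ ∑ _n ∈ F, t M := Finset.sum_le_sum hpiece
      _ = (F.card : ℝ≥0∞) * t M := by rw [Finset.sum_const, nsmul_eq_mul]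
      _ = ENNReal.ofReal ((2:ℝ) ^ (M * d : ℕ)) * t M := by
          rw [hcard]
          congr 1
          rw [← ENNReal.ofReal_natCast]
          congr 1
          push_cast
          ring
      _ = ENNReal.ofReal (((2:ℝ) ^ (-(2:ℝ)⁻¹)) ^ M) := by
          rw [ht]
          rw [← ENNReal.ofReal_mul (by positivity)]
          congr 1
          rw [← Real.rpow_natCast (2:ℝ) (M*d), ← Real.rpow_natCast ((2:ℝ) ^ (-(2:ℝ)⁻¹)) M,
            ← Real.rpow_mul (by norm_num), ← Real.rpow_add (by norm_num)]
          congr 1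
          push_cast
          ring
  have hsum : (∑' M, μ (S M)) ≠ ⊤ := by
    have hr0 : (0:ℝ) ≤ (2:ℝ) ^ (-(2:ℝ)⁻¹) := Real.rpow_nonneg (by norm_num) _
    have hr1 : (2:ℝ) ^ (-(2:ℝ)⁻¹) < 1 :=
      Real.rpow_lt_one_of_one_lt_of_neg (by norm_num) (by norm_num)
    have hsummable : Summable (fun M : ℕ => ((2:ℝ) ^ (-(2:ℝ)⁻¹)) ^ M) :=
      summable_geometric_of_lt_one hr0 hr1
    have heq := ENNReal.ofReal_tsum_of_nonneg (fun M => by positivity) hsummable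
    have h2 : (∑' M, μ (S M)) ≤ ENNReal.ofReal (∑' (n : ℕ), ((2:ℝ) ^ (-(2:ℝ)⁻¹)) ^ n) := by
      rw [heq]
      exact ENNReal.tsum_le_tsum hmeas
    exact ne_top_of_lt (lt_of_le_of_lt h2 ENNReal.ofReal_lt_top)
  have hBC := MeasureTheory.ae_eventually_notMem (μ := μ) hsum
  have hcube : ∀ᵐ x ∂μ, ∀ i, x i ∈ Set.Ico (0:ℝ) 1 := by
    rw [MeasureTheory.ae_iff]
    exact hsupp
  filter_upwards [hBC, hcube] with x hx hxc
  filter_upwards [hx] with M hM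
  by_contra hlt
  exact hM ⟨hxc, not_le.mp hlt⟩

/-- **Abundance of dyadic doubling scales.** Let `a ≥ 1`, `0 < p < 1`, and set
`c = 2^{-2ad/(1-p)}`. For any finite Borel measure `μ` on `[0,1)^d`, for
`μ`-a.e. `x`, the lower asymptotic proportion of scales `k ∈ [N]` with
`μ(Q^{k+a,x}) ≥ c · μ(Q^{k,x})` is at least `p`. -/
theorem abundance_of_dyadic_doubling_scales (d a : ℕ) (hd : 0 < d)
    (ha : 0 < a) (p : ℝ) (hp : 0 < p) (hp1 : p < 1)
    (μ : Measure (Fin d → ℝ)) [IsFiniteMeasure μ]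
    (hsupp : μ {x | ¬ ∀ i, x i ∈ Set.Ico (0 : ℝ) 1} = 0) :
    ∀ᵐ x ∂μ, p ≤
      liminf (fun N : ℕ =>
        (((Finset.Icc 1 N).filter fun k =>
            ENNReal.ofReal ((2 : ℝ) ^ (-(2 * (a : ℝ) * d) / (1 - p))) *
              μ (dyadicCube d k x) ≤ μ (dyadicCube d (k + a) x)).card : ℝ) /
          N) atTop := by
  have hp' : (0:ℝ) < 1 - p := by linarith
  set c : ℝ := (2 : ℝ) ^ (-(2 * (a : ℝ) * d) / (1 - p)) with hc
  set C : ℝ≥0∞ := ENNReal.ofReal c with hCdef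
  have hc0 : 0 < c := Real.rpow_pos_of_pos (by norm_num) _
  have hc1 : c ≤ 1 := by
    apply Real.rpow_le_one_of_one_le_of_nonpos (by norm_num)
    apply div_nonpos_of_nonpos_of_nonneg
    · have : (0:ℝ) ≤ 2 * (a:ℝ) * d := by positivity
      linarith
    · linarith
  set m : ℝ := (μ Set.univ).toReal with hm
  have hm0 : 0 ≤ m := ENNReal.toReal_nonneg
  have hμuniv : μ Set.univ = ENNReal.ofReal m := (ENNReal.ofReal_toReal (measure_ne_top μ _)).symm
  filter_upwards [ae_lower μ hsupp] with x hx
  set u : ℕ → ℝ := fun N =>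
    (((Finset.Icc 1 N).filter fun k =>
        C * μ (dyadicCube d k x) ≤ μ (dyadicCube d (k + a) x)).card : ℝ) / N with hu
  have hx' : ∀ᶠ N : ℕ in atTop,
      ENNReal.ofReal ((2:ℝ) ^ (-(((N + a : ℕ)):ℝ) * (d + 2⁻¹))) ≤ μ (dyadicCube d (N + a) x) :=
    (tendsto_add_atTop_nat a).eventually hx
  have hgrow : ∀ᶠ N : ℕ in atTop,
      m ^ a < (2:ℝ) ^ ((a:ℝ) * (((d:ℝ) - 2⁻¹) * N - a * ((d:ℝ) + 2⁻¹))) := by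
    have h1 : Tendsto (fun N : ℕ => (a:ℝ) * (((d:ℝ) - 2⁻¹) * N - a * ((d:ℝ) + 2⁻¹))) atTop atTop := by
      apply Tendsto.const_mul_atTop (by exact_mod_cast ha : (0:ℝ) < a)
      apply tendsto_atTop_add_const_right
      apply Tendsto.const_mul_atTop
      · have : (1:ℝ) ≤ d := by exact_mod_cast hd
        linarith
      · exact tendsto_natCast_atTop_atTop
    have h2 : Tendsto (fun y : ℝ => (2:ℝ) ^ y) atTop atTop := by
      have := Real.tendsto_exp_atTop
      have h3 : Tendsto (fun y : ℝ => Real.log 2 * y) atTop atTop :=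
        Tendsto.const_mul_atTop (Real.log_pos (by norm_num)) tendsto_id
      have h4 := this.comp h3
      exact h4.congr (fun y => (Real.rpow_def_of_pos (by norm_num) y).symm)
    exact (h2.comp h1).eventually_gt_atTop (m ^ a)
  have hev : ∀ᶠ N : ℕ in atTop, p ≤ u N := by
    filter_upwards [hx', hgrow, eventually_ge_atTop 1] with N hlow hgr hN1
    have hNpos : (0:ℝ) < N := by exact_mod_cast hN1
    rw [hu]
    simp only
    rw [le_div_iff₀ hNpos]
    by_contra hcon
    push_neg at hcon
    -- bad count
    set B : ℕ := ((Finset.Icc 1 N).filter fun k =>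
        ¬ C * μ (dyadicCube d k x) ≤ μ (dyadicCube d (k + a) x)).card with hB
    have hsplit : (((Finset.Icc 1 N).filter fun k =>
        C * μ (dyadicCube d k x) ≤ μ (dyadicCube d (k + a) x)).card) + B = N := by
      rw [hB, Finset.card_filter_add_card_filter_not, Nat.card_Icc]
      omega
    have hBreal : (1 - p) * N ≤ (B:ℝ) := by
      have : ((((Finset.Icc 1 N).filter fun k =>
          C * μ (dyadicCube d k x) ≤ μ (dyadicCube d (k + a) x)).card : ℝ)) + B = N := by
        exact_mod_cast hsplit
      nlinarith
    have hkey := key_bound a ha μ x C (by rw [hCdef]; exact ENNReal.ofReal_ne_top) N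
    rw [← hB] at hkey
    set τ : ℝ := (2:ℝ) ^ (-(((N + a : ℕ)):ℝ) * (d + 2⁻¹)) with hτ
    have hτ0 : 0 ≤ τ := (Real.rpow_pos_of_pos (by norm_num) _).le
    have hlhs : ENNReal.ofReal (τ ^ a) ≤ μ (dyadicCube d (N + a) x) ^ a := by
      rw [ENNReal.ofReal_pow hτ0]
      exact pow_le_pow_left' hlow a
    have hrhs : C ^ B * μ Set.univ ^ a = ENNReal.ofReal (c ^ B * m ^ a) := by
      rw [hCdef, hμuniv, ← ENNReal.ofReal_pow hm0, ← ENNReal.ofReal_pow hc0.le,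
        ← ENNReal.ofReal_mul (by positivity)]
    have hreal : τ ^ a ≤ c ^ B * m ^ a := by
      have := hlhs.trans (hkey.trans_eq hrhs)
      exact (ENNReal.ofReal_le_ofReal_iff (by positivity)).mp this
    -- now derive contradiction
    have h1 : c ^ B ≤ c ^ ((1 - p) * N : ℝ) := by
      rw [← Real.rpow_natCast c B]
      exact Real.rpow_le_rpow_of_exponent_ge hc0 hc1 hBreal
    have h2 : c ^ ((1 - p) * N : ℝ) = (2:ℝ) ^ (-(2 * (a:ℝ) * d) * N) := by
      rw [hc, ← Real.rpow_mul (by norm_num : (0:ℝ) ≤ 2)]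
      congr 1
      field_simp
    have h3 : τ ^ a = (2:ℝ) ^ ((-(((N + a : ℕ)):ℝ) * (d + 2⁻¹)) * a) := by
      rw [hτ, ← Real.rpow_natCast ((2:ℝ) ^ (-(((N + a : ℕ)):ℝ) * (d + 2⁻¹))) a,
        ← Real.rpow_mul (by norm_num)]
    have hfin : τ ^ a < (2:ℝ) ^ ((-(((N + a : ℕ)):ℝ) * (d + 2⁻¹)) * a) := by
      calc τ ^ a ≤ c ^ B * m ^ a := hreal
        _ ≤ c ^ ((1 - p) * N : ℝ) * m ^ a := by
            apply mul_le_mul_of_nonneg_right h1 (by positivity)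
        _ = (2:ℝ) ^ (-(2 * (a:ℝ) * d) * N) * m ^ a := by rw [h2]
        _ < (2:ℝ) ^ (-(2 * (a:ℝ) * d) * N) *
            (2:ℝ) ^ ((a:ℝ) * (((d:ℝ) - 2⁻¹) * N - a * ((d:ℝ) + 2⁻¹))) := by
            apply mul_lt_mul_of_pos_left hgr (Real.rpow_pos_of_pos (by norm_num) _)
        _ = (2:ℝ) ^ ((-(((N + a : ℕ)):ℝ) * (d + 2⁻¹)) * a) := by
            rw [← Real.rpow_add (by norm_num)]
            congr 1
            push_cast
            ring
    rw [h3] at hfin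
    exact lt_irrefl _ hfin
  -- conclude liminf
  have hub : ∀ N, u N ≤ 1 := by
    intro N
    rw [hu]
    simp only
    rcases Nat.eq_zero_or_pos N with h | h
    · simp [h]
    · rw [div_le_one (by exact_mod_cast h)]
      have := Finset.card_filter_le (Finset.Icc 1 N) (fun k =>
        C * μ (dyadicCube d k x) ≤ μ (dyadicCube d (k + a) x))
      have h2 : (Finset.Icc 1 N).card = N := by rw [Nat.card_Icc]; omega
      exact_mod_cast h2 ▸ this
  exact le_liminf_of_le (isCoboundedUnder_ge_of_le atTop hub) hev
end

section
/- Martingale labeling lemma: Let mu be a Borel probability measure on [0,1)^d and a a positive integer. Suppose each dyadic cube is labeled 'black' or 'white', and for a cube Q let Q_black be the union of those subcubes Q' of Q of generation a deeper that are black. Then for mu-almost every x in [0,1)^d, lim_{N -> infinity} (1/N) * sum_{k=1}^{N} ( mu(Q_black^{k,x}) / mu(Q^{k,x}) - 1_{Q^{k,x} is black} ) = 0, where terms with mu(Q^{k,x}) = 0 are interpreted as 0. -/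
open MeasureTheory Filter
open scoped ENNReal

/-- The corner (lattice coordinates) of the generation-`k` dyadic cube
containing `x`; it determines the cube. -/
noncomputable def dyadicCorner (d k : ℕ) (x : Fin d → ℝ) : Fin d → ℤ :=
  fun i => ⌊(2 : ℝ) ^ k * x i⌋

/-- Given a labeling `black` of dyadic cubes (generation, corner) ↦ Bool,
`blackPart d black a k x` is the union of the black generation-`(k+a)`
subcubes of `Q^{k,x}`. -/
def blackPart (d : ℕ) (black : ℕ → (Fin d → ℤ) → Bool) (a k : ℕ)
    (x : Fin d → ℝ) : Set (Fin d → ℝ) :=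
  {y ∈ dyadicCube d k x | black (k + a) (dyadicCorner d (k + a) y) = true}

namespace MLL

lemma floor_div_nat' (r : ℝ) (n : ℕ) (hn : 0 < n) : ⌊r / (n : ℝ)⌋ = ⌊r⌋ / (n : ℤ) := by
  have hn' : (0:ℤ) < (n:ℤ) := by exact_mod_cast hn
  have hnR : (0:ℝ) < (n:ℝ) := by exact_mod_cast hn
  rw [Int.floor_eq_iff]
  constructor
  · rw [le_div_iff₀ hnR]
    have h1 : (⌊r⌋ / (n:ℤ)) * (n:ℤ) ≤ ⌊r⌋ := Int.ediv_mul_le _ hn'.ne'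
    calc ((⌊r⌋ / (n:ℤ) : ℤ) : ℝ) * (n:ℝ) = (((⌊r⌋ / (n:ℤ)) * (n:ℤ) : ℤ) : ℝ) := by push_cast; ring
      _ ≤ (⌊r⌋ : ℝ) := by exact_mod_cast h1
      _ ≤ r := Int.floor_le r
  · rw [div_lt_iff₀ hnR]
    have h1 : ⌊r⌋ < (⌊r⌋ / (n:ℤ) + 1) * (n:ℤ) := Int.lt_ediv_add_one_mul_self _ hn'
    have h2 : (⌊r⌋:ℝ) + 1 ≤ (((⌊r⌋ / (n:ℤ) + 1) * (n:ℤ) : ℤ) : ℝ) := by exact_mod_cast h1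
    calc r < (⌊r⌋:ℝ) + 1 := Int.lt_floor_add_one r
      _ ≤ (((⌊r⌋ / (n:ℤ) + 1) * (n:ℤ) : ℤ) : ℝ) := h2
      _ = (((⌊r⌋ / (n:ℤ) : ℤ) : ℝ) + 1) * (n:ℝ) := by push_cast; ring

lemma corner_of_le {d j k : ℕ} (h : j ≤ k) (x : Fin d → ℝ) :
    dyadicCorner d j x = fun i => dyadicCorner d k x i / (2 ^ (k - j) : ℤ) := by
  funext i
  have h2 : (2:ℝ) ^ j * x i = (2:ℝ) ^ k * x i / ((2 ^ (k - j) : ℕ) : ℝ) := by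
    rw [eq_div_iff (by positivity)]
    push_cast
    have h3 : (2:ℝ) ^ j * (2:ℝ) ^ (k - j) = 2 ^ k := by
      rw [← pow_add, Nat.add_sub_cancel' h]
    linear_combination x i * h3
  simp only [dyadicCorner]
  rw [h2, floor_div_nat' _ _ (by positivity)]
  push_cast
  rfl

def cell (d k : ℕ) (c : Fin d → ℤ) : Set (Fin d → ℝ) := dyadicCorner d k ⁻¹' {c}

def bset (d : ℕ) (black : ℕ → (Fin d → ℤ) → Bool) (m : ℕ) : Set (Fin d → ℝ) :=
  {y | black m (dyadicCorner d m y) = true}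

lemma measurable_corner (d k : ℕ) : Measurable (dyadicCorner d k) :=
  measurable_pi_lambda _ fun i => ((measurable_pi_apply i).const_mul _).floor

lemma measurableSet_cell {d k : ℕ} (c : Fin d → ℤ) : MeasurableSet (cell d k c) :=
  measurable_corner d k (measurableSet_singleton c)

lemma measurableSet_bset {d : ℕ} (black : ℕ → (Fin d → ℤ) → Bool) (m : ℕ) :
    MeasurableSet (bset d black m) := by
  have h : bset d black m = dyadicCorner d m ⁻¹' {c | black m c = true} := rfl
  rw [h]
  exact measurable_corner d m ((Set.to_countable _).measurableSet)

lemma cube_eq {d : ℕ} (k : ℕ) (x : Fin d → ℝ) :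
    dyadicCube d k x = cell d k (dyadicCorner d k x) := by
  ext y
  simp [dyadicCube, cell, dyadicCorner, funext_iff]

lemma blackPart_eq {d : ℕ} (black : ℕ → (Fin d → ℤ) → Bool) (a k : ℕ) (x : Fin d → ℝ) :
    blackPart d black a k x = cell d k (dyadicCorner d k x) ∩ bset d black (k + a) := by
  rw [blackPart, cube_eq]
  rfl

end MLL

namespace MLL2
open MLL

set_option linter.unusedSectionVars false

variable {d : ℕ} (μ : Measure (Fin d → ℝ)) [IsProbabilityMeasure μ]
  (black : ℕ → (Fin d → ℤ) → Bool) (a : ℕ)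

/-- the value of the ratio on the cell with corner `c`. -/
noncomputable def phi (k : ℕ) (c : Fin d → ℤ) : ℝ :=
  (μ (cell d k c ∩ bset d black (k + a))).toReal / (μ (cell d k c)).toReal

lemma ratio_eq (k : ℕ) (x : Fin d → ℝ) :
    (μ (blackPart d black a k x)).toReal / (μ (dyadicCube d k x)).toReal
      = phi μ black a k (dyadicCorner d k x) := by
  rw [blackPart_eq, cube_eq]; rfl

lemma phi_nonneg (k : ℕ) (c : Fin d → ℤ) : 0 ≤ phi μ black a k c :=
  div_nonneg ENNReal.toReal_nonneg ENNReal.toReal_nonneg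

lemma phi_le_one (k : ℕ) (c : Fin d → ℤ) : phi μ black a k c ≤ 1 := by
  apply div_le_one_of_le₀
  · exact ENNReal.toReal_mono (measure_ne_top μ _) (measure_mono Set.inter_subset_left)
  · exact ENNReal.toReal_nonneg

noncomputable def bFun (m : ℕ) (x : Fin d → ℝ) : ℝ := if black m (dyadicCorner d m x) then 1 else 0

lemma bFun_eq_indicator (m : ℕ) :
    bFun black m = (bset d black m).indicator (fun _ => (1:ℝ)) := by
  funext x
  simp [bFun, Set.indicator_apply, bset, Set.mem_setOf_eq]

lemma bFun_mem (m : ℕ) (x : Fin d → ℝ) : bFun black m x = 0 ∨ bFun black m x = 1 := by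
  unfold bFun; split <;> simp

lemma measurable_bFun (m : ℕ) : Measurable (bFun black m (d := d)) := by
  have : bFun black m (d := d)
      = (fun c => if black m c then (1:ℝ) else 0) ∘ dyadicCorner d m := rfl
  rw [this]
  exact (measurable_of_countable (fun c => if black m c then (1:ℝ) else 0)).comp
    (measurable_corner d m)

/-- the martingale-difference-type function. -/
noncomputable def Y (k : ℕ) (x : Fin d → ℝ) : ℝ :=
  phi μ black a k (dyadicCorner d k x) - bFun black (k + a) x

lemma measurable_Y (k : ℕ) : Measurable (Y μ black a k) :=
  Measurable.sub
    ((measurable_of_countable (phi μ black a k)).comp (measurable_corner d k))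
    (measurable_bFun black (k + a))

lemma abs_Y_le_one (k : ℕ) (x : Fin d → ℝ) : |Y μ black a k x| ≤ 1 := by
  rw [abs_le]
  have h1 := phi_nonneg μ black a k (dyadicCorner d k x)
  have h2 := phi_le_one μ black a k (dyadicCorner d k x)
  rcases bFun_mem black (k + a) x with h | h <;> unfold Y <;> rw [h] <;> constructor <;> linarith

lemma integrable_Y (k : ℕ) : Integrable (Y μ black a k) μ :=
  (integrable_const (1:ℝ)).mono' (measurable_Y μ black a k).aestronglyMeasurable
    (Filter.Eventually.of_forall fun x => by
      rw [Real.norm_eq_abs]; exact abs_Y_le_one μ black a k x)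

lemma setIntegral_Y_cell (k : ℕ) (c : Fin d → ℤ) :
    ∫ x in cell d k c, Y μ black a k x ∂μ = 0 := by
  have hcell : MeasurableSet (cell d k c) := measurableSet_cell c
  have hb : MeasurableSet (bset d black (k + a)) := measurableSet_bset black (k + a)
  have hint1 : Integrable (fun x => phi μ black a k (dyadicCorner d k x)) (μ.restrict (cell d k c)) := by
    refine (integrable_const (1:ℝ)).mono' ?_ ?_
    · exact ((measurable_of_countable (phi μ black a k)).comp
        (measurable_corner d k)).aestronglyMeasurable
    refine Filter.Eventually.of_forall fun x => ?_
    rw [Real.norm_eq_abs, abs_of_nonneg (phi_nonneg μ black a k _)]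
    exact phi_le_one μ black a k _
  have hint2 : Integrable (bFun black (k + a)) (μ.restrict (cell d k c)) := by
    apply (integrable_const (1:ℝ)).mono' (measurable_bFun black (k + a)).aestronglyMeasurable
    refine Filter.Eventually.of_forall fun x => ?_
    rcases bFun_mem black (k + a) x with h | h <;> rw [Real.norm_eq_abs, h] <;> norm_num
  have hsplit : ∫ x in cell d k c, Y μ black a k x ∂μ
      = (∫ x in cell d k c, phi μ black a k (dyadicCorner d k x) ∂μ)
        - ∫ x in cell d k c, bFun black (k + a) x ∂μ := integral_sub hint1 hint2
  have h1 : ∫ x in cell d k c, phi μ black a k (dyadicCorner d k x) ∂μ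
      = (μ (cell d k c)).toReal * phi μ black a k c := by
    rw [setIntegral_congr_fun hcell (g := fun _ => phi μ black a k c)
      (fun x hx => by rw [show dyadicCorner d k x = c from hx]), setIntegral_const, smul_eq_mul, measureReal_def]
  have h2 : ∫ x in cell d k c, bFun black (k + a) x ∂μ
      = (μ (cell d k c ∩ bset d black (k + a))).toReal := by
    rw [bFun_eq_indicator, setIntegral_indicator hb, setIntegral_const, smul_eq_mul, mul_one, measureReal_def]
  rw [hsplit, h1, h2]
  rcases eq_or_ne ((μ (cell d k c)).toReal) 0 with h0 | h0
  · have hB : (μ (cell d k c ∩ bset d black (k + a))).toReal = 0 := by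
      have := ENNReal.toReal_mono (measure_ne_top μ _)
        (measure_mono (Set.inter_subset_left (s := cell d k c) (t := bset d black (k + a))))
      have h3 := ENNReal.toReal_nonneg (a := μ (cell d k c ∩ bset d black (k + a)))
      linarith [h0 ▸ this]
    rw [h0, hB]; ring
  · unfold phi
    rw [mul_comm, div_mul_cancel₀ _ h0, sub_self]

lemma integral_mul_Y (k : ℕ) (G : (Fin d → ℤ) → ℝ) (hG : ∀ c, |G c| ≤ 1) :
    ∫ x, G (dyadicCorner d k x) * Y μ black a k x ∂μ = 0 := by
  have hunion : (⋃ c : Fin d → ℤ, cell d k c) = Set.univ := by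
    ext x
    simp only [Set.mem_iUnion, Set.mem_univ, iff_true]
    exact ⟨dyadicCorner d k x, rfl⟩
  have hdis : Pairwise (Function.onFun Disjoint fun c : Fin d → ℤ => cell d k c) := by
    intro c c' hcc
    rw [Function.onFun, Set.disjoint_left]
    intro x hx hx'
    exact hcc ((Set.mem_singleton_iff.mp hx).symm.trans (Set.mem_singleton_iff.mp hx'))
  have hmeas : Measurable (fun x => G (dyadicCorner d k x) * Y μ black a k x) :=
    ((measurable_of_countable G).comp (measurable_corner d k)).mul (measurable_Y μ black a k)
  have hint : Integrable (fun x => G (dyadicCorner d k x) * Y μ black a k x) μ := by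
    apply (integrable_const (1:ℝ)).mono' hmeas.aestronglyMeasurable
    refine Filter.Eventually.of_forall fun x => ?_
    rw [Real.norm_eq_abs, abs_mul]
    calc |G (dyadicCorner d k x)| * |Y μ black a k x| ≤ 1 * 1 :=
          mul_le_mul (hG _) (abs_Y_le_one μ black a k x) (abs_nonneg _) zero_le_one
      _ = 1 := mul_one 1
  have key := integral_iUnion (fun c : Fin d → ℤ => measurableSet_cell c) hdis
    hint.integrableOn
  rw [hunion, Measure.restrict_univ] at key
  rw [key]
  have hterm : ∀ c : Fin d → ℤ,
      ∫ x in cell d k c, G (dyadicCorner d k x) * Y μ black a k x ∂μ = 0 := by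
    intro c
    rw [setIntegral_congr_fun (measurableSet_cell c)
      (g := fun x => G c * Y μ black a k x)
      (fun x hx => by rw [show dyadicCorner d k x = c from hx]),
      integral_const_mul, setIntegral_Y_cell, mul_zero]
  simp only [hterm, tsum_zero]

lemma Y_eq_comp {j k : ℕ} (h : j + a ≤ k) :
    ∃ G : (Fin d → ℤ) → ℝ, (∀ c, |G c| ≤ 1) ∧
      ∀ x, Y μ black a j x = G (dyadicCorner d k x) := by
  refine ⟨fun c => phi μ black a j (fun i => c i / (2 ^ (k - j) : ℤ))
      - (if black (j + a) (fun i => c i / (2 ^ (k - (j + a)) : ℤ)) then 1 else 0), ?_, ?_⟩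
  · intro c
    rw [abs_le]
    have h1 := phi_nonneg μ black a j (fun i => c i / (2 ^ (k - j) : ℤ))
    have h2 := phi_le_one μ black a j (fun i => c i / (2 ^ (k - j) : ℤ))
    dsimp only
    split <;> constructor <;> linarith
  · intro x
    have hj : j ≤ k := le_trans (Nat.le_add_right j a) h
    have e1 := corner_of_le hj x
    have e2 := corner_of_le h x
    unfold Y bFun
    rw [e1, e2]

lemma integral_Y_mul_Y {j k : ℕ} (h : j + a ≤ k) :
    ∫ x, Y μ black a j x * Y μ black a k x ∂μ = 0 := by
  obtain ⟨G, hG, hYG⟩ := Y_eq_comp μ black a h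
  have : (fun x => Y μ black a j x * Y μ black a k x)
      = fun x => G (dyadicCorner d k x) * Y μ black a k x := by
    funext x; rw [hYG x]
  rw [this]
  exact integral_mul_Y μ black a k G hG

lemma integrable_Y_mul_Y (j k : ℕ) :
    Integrable (fun x => Y μ black a j x * Y μ black a k x) μ := by
  apply (integrable_const (1:ℝ)).mono'
    ((measurable_Y μ black a j).mul (measurable_Y μ black a k)).aestronglyMeasurable
  refine Filter.Eventually.of_forall fun x => ?_
  rw [Real.norm_eq_abs, Pi.mul_apply, abs_mul]
  calc |Y μ black a j x| * |Y μ black a k x| ≤ 1 * 1 :=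
        mul_le_mul (abs_Y_le_one μ black a j x) (abs_Y_le_one μ black a k x)
          (abs_nonneg _) zero_le_one
    _ = 1 := mul_one 1

lemma abs_integral_Y_mul_Y_le_one (j k : ℕ) :
    |∫ x, Y μ black a j x * Y μ black a k x ∂μ| ≤ 1 := by
  have := norm_integral_le_of_norm_le_const (μ := μ)
    (f := fun x => Y μ black a j x * Y μ black a k x) (C := 1)
    (Filter.Eventually.of_forall fun x => by
      rw [Real.norm_eq_abs, abs_mul]
      calc |Y μ black a j x| * |Y μ black a k x| ≤ 1 * 1 :=
            mul_le_mul (abs_Y_le_one μ black a j x) (abs_Y_le_one μ black a k x)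
              (abs_nonneg _) zero_le_one
        _ = 1 := mul_one 1)
  simpa using this

lemma row_sum_le (N j : ℕ) :
    ∑ k ∈ Finset.Icc 1 N, (∫ x, Y μ black a j x * Y μ black a k x ∂μ) ≤ 2 * a := by
  classical
  have hzero : ∀ k, j + a ≤ k ∨ k + a ≤ j →
      (∫ x, Y μ black a j x * Y μ black a k x ∂μ) = 0 := by
    intro k hk
    rcases hk with hk | hk
    · exact integral_Y_mul_Y μ black a hk
    · have : (fun x => Y μ black a j x * Y μ black a k x)
          = fun x => Y μ black a k x * Y μ black a j x := by funext x; ring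
      rw [this]
      exact integral_Y_mul_Y μ black a hk
  set P : ℕ → Prop := fun k => ¬(j + a ≤ k ∨ k + a ≤ j) with hP
  have hfilter : ∑ k ∈ Finset.Icc 1 N, (∫ x, Y μ black a j x * Y μ black a k x ∂μ)
      = ∑ k ∈ (Finset.Icc 1 N).filter P, (∫ x, Y μ black a j x * Y μ black a k x ∂μ) := by
    symm
    apply Finset.sum_filter_of_ne
    intro k _ hne
    exact fun hk => hne (hzero k hk)
  rw [hfilter]
  have hsub : (Finset.Icc 1 N).filter P ⊆ Finset.Icc (j + 1 - a) (j + a - 1) := by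
    intro k hk
    rw [Finset.mem_filter] at hk
    rw [Finset.mem_Icc]
    have := hk.2
    rw [hP] at this
    push_neg at this
    omega
  calc ∑ k ∈ (Finset.Icc 1 N).filter P, (∫ x, Y μ black a j x * Y μ black a k x ∂μ)
      ≤ ∑ k ∈ (Finset.Icc 1 N).filter P, (1:ℝ) :=
        Finset.sum_le_sum fun k _ => le_trans (le_abs_self _)
          (abs_integral_Y_mul_Y_le_one μ black a j k)
    _ = ((Finset.Icc 1 N).filter P).card := by rw [Finset.sum_const, nsmul_eq_mul, mul_one]
    _ ≤ ((Finset.Icc (j + 1 - a) (j + a - 1)).card : ℝ) := by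
        exact_mod_cast Nat.cast_le.mpr (Finset.card_le_card hsub)
    _ ≤ 2 * a := by
        rw [Nat.card_Icc]
        have : (j + a - 1 + 1 - (j + 1 - a)) ≤ 2 * a := by omega
        exact_mod_cast Nat.cast_le.mpr this

noncomputable def S (N : ℕ) (x : Fin d → ℝ) : ℝ := ∑ k ∈ Finset.Icc 1 N, Y μ black a k x

lemma measurable_S (N : ℕ) : Measurable (S μ black a N) :=
  Finset.measurable_sum _ (fun k _ => measurable_Y μ black a k)

lemma abs_S_le (N : ℕ) (x : Fin d → ℝ) : |S μ black a N x| ≤ N := by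
  calc |S μ black a N x| ≤ ∑ k ∈ Finset.Icc 1 N, |Y μ black a k x| :=
        Finset.abs_sum_le_sum_abs _ _
    _ ≤ ∑ k ∈ Finset.Icc 1 N, (1:ℝ) :=
        Finset.sum_le_sum fun k _ => abs_Y_le_one μ black a k x
    _ = ((Finset.Icc 1 N).card : ℝ) := by rw [Finset.sum_const, nsmul_eq_mul, mul_one]
    _ = N := by rw [Nat.card_Icc]; norm_num

lemma integrable_S_sq (N : ℕ) : Integrable (fun x => (S μ black a N x) ^ 2) μ := by
  apply (integrable_const ((N:ℝ) ^ 2)).mono'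
    (((measurable_S μ black a N).pow measurable_const)).aestronglyMeasurable
  refine Filter.Eventually.of_forall fun x => ?_
  rw [Real.norm_eq_abs, abs_pow]
  exact pow_le_pow_left₀ (abs_nonneg _) (abs_S_le μ black a N x) 2

lemma integral_S_sq_le (N : ℕ) :
    ∫ x, (S μ black a N x) ^ 2 ∂μ ≤ 2 * a * N := by
  have hexp : (fun x => (S μ black a N x) ^ 2)
      = fun x => ∑ j ∈ Finset.Icc 1 N, ∑ k ∈ Finset.Icc 1 N,
          Y μ black a j x * Y μ black a k x := by
    funext x
    rw [sq, S, Finset.sum_mul_sum]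
  rw [hexp]
  rw [integral_finset_sum _ (fun j _ => integrable_finset_sum _
    (fun k _ => integrable_Y_mul_Y μ black a j k))]
  have hrow : ∀ j ∈ Finset.Icc 1 N,
      (∫ x, ∑ k ∈ Finset.Icc 1 N, Y μ black a j x * Y μ black a k x ∂μ) ≤ 2 * a := by
    intro j _
    rw [integral_finset_sum _ (fun k _ => integrable_Y_mul_Y μ black a j k)]
    exact row_sum_le μ black a N j
  calc ∑ j ∈ Finset.Icc 1 N, (∫ x, ∑ k ∈ Finset.Icc 1 N,
          Y μ black a j x * Y μ black a k x ∂μ)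
      ≤ ∑ j ∈ Finset.Icc 1 N, (2 * (a:ℝ)) := Finset.sum_le_sum hrow
    _ = ((Finset.Icc 1 N).card : ℝ) * (2 * a) := by rw [Finset.sum_const, nsmul_eq_mul]
    _ = 2 * a * N := by rw [Nat.card_Icc]; push_cast; ring

end MLL2

namespace MLL

lemma telescope_abs_le (g : ℕ → ℝ) (hg0 : ∀ k, 0 ≤ g k) (hg1 : ∀ k, g k ≤ 1) (a N : ℕ) :
    |∑ k ∈ Finset.Icc 1 N, (g (k + a) - g k)| ≤ 2 * a := by
  classical
  have hsum_le : ∀ u : Finset ℕ, u.card ≤ a → ∑ k ∈ u, g k ≤ a := by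
    intro u hu
    calc ∑ k ∈ u, g k ≤ ∑ k ∈ u, (1:ℝ) := Finset.sum_le_sum fun k _ => hg1 k
      _ = (u.card : ℝ) := by rw [Finset.sum_const, nsmul_eq_mul, mul_one]
      _ ≤ a := by exact_mod_cast hu
  have hshift : ∑ k ∈ Finset.Icc 1 N, g (k + a) = ∑ k ∈ Finset.Icc (1 + a) (N + a), g k := by
    rw [← Finset.map_add_right_Icc, Finset.sum_map]
    rfl
  rw [Finset.sum_sub_distrib, hshift]
  set s := Finset.Icc (1 + a) (N + a) with hs
  set t := Finset.Icc 1 N with ht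
  have hid : ∑ k ∈ s, g k - ∑ k ∈ t, g k = ∑ k ∈ s \ t, g k - ∑ k ∈ t \ s, g k := by
    rw [← Finset.sum_inter_add_sum_sdiff s t g, ← Finset.sum_inter_add_sum_sdiff t s g,
      Finset.inter_comm]
    ring
  rw [hid]
  have hcard1 : (s \ t).card ≤ a := by
    have hsub : s \ t ⊆ Finset.Icc (N + 1) (N + a) := by
      intro k hk
      simp only [Finset.mem_sdiff, Finset.mem_Icc, hs, ht] at hk ⊢
      omega
    calc (s \ t).card ≤ (Finset.Icc (N + 1) (N + a)).card := Finset.card_le_card hsub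
      _ ≤ a := by rw [Nat.card_Icc]; omega
  have hcard2 : (t \ s).card ≤ a := by
    have hsub : t \ s ⊆ Finset.Icc 1 a := by
      intro k hk
      simp only [Finset.mem_sdiff, Finset.mem_Icc, hs, ht] at hk ⊢
      omega
    calc (t \ s).card ≤ (Finset.Icc 1 a).card := Finset.card_le_card hsub
      _ ≤ a := by rw [Nat.card_Icc]; omega
  have h1 := hsum_le _ hcard1
  have h2 := hsum_le _ hcard2
  have h3 : (0:ℝ) ≤ ∑ k ∈ s \ t, g k := Finset.sum_nonneg fun k _ => hg0 k
  have h4 : (0:ℝ) ≤ ∑ k ∈ t \ s, g k := Finset.sum_nonneg fun k _ => hg0 k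
  rw [abs_le]
  constructor <;> linarith

lemma tendsto_sqrt_atTop : Tendsto (fun N : ℕ => Nat.sqrt N) atTop atTop := by
  apply tendsto_atTop_atTop.mpr
  intro b
  refine ⟨b ^ 2, fun n hn => ?_⟩
  have := Nat.sqrt_le_sqrt hn
  rwa [Nat.sqrt_eq'] at this

lemma fillin {u : ℕ → ℝ} (hu : ∀ k, |u k| ≤ 1)
    (h : Tendsto (fun M : ℕ => (∑ k ∈ Finset.Icc 1 (M ^ 2), u k) / ((M ^ 2 : ℕ) : ℝ))
      atTop (nhds 0)) :
    Tendsto (fun N : ℕ => (∑ k ∈ Finset.Icc 1 N, u k) / (N : ℝ)) atTop (nhds 0) := by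
  set v : ℕ → ℝ := fun n => ∑ k ∈ Finset.Icc 1 n, u k with hv
  apply squeeze_zero_norm'
    (a := fun N : ℕ => |v ((Nat.sqrt N) ^ 2) / (((Nat.sqrt N) ^ 2 : ℕ) : ℝ)| + 2 / (Nat.sqrt N : ℝ))
  · filter_upwards [eventually_ge_atTop 1] with N hN
    set M := Nat.sqrt N with hM
    have hM1 : 1 ≤ M := Nat.sqrt_pos.mpr hN
    have hMN : M ^ 2 ≤ N := Nat.sqrt_le' N
    have hN2 : N < (M + 1) * (M + 1) := Nat.lt_succ_sqrt N
    have hMR : (1:ℝ) ≤ (M:ℝ) := by exact_mod_cast hM1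
    have hM2pos : (0:ℝ) < ((M ^ 2 : ℕ) : ℝ) := by
      push_cast
      nlinarith
    have hMne : (M:ℝ) ≠ 0 := by linarith
    have hNpos : (0:ℝ) < (N:ℝ) := by exact_mod_cast hN
    have hdiff : v N - v (M ^ 2) = ∑ k ∈ Finset.Ioc (M ^ 2) N, u k := by
      have hIcc : ∀ n : ℕ, Finset.Icc 1 n = Finset.Ioc 0 n := fun n => Finset.Icc_add_one_left_eq_Ioc 0 n
      rw [hv]
      simp only [hIcc]
      have hcons := Finset.sum_Ioc_consecutive u (Nat.zero_le (M ^ 2)) hMN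
      linarith
    have habs : |v N| ≤ |v (M ^ 2)| + 2 * M := by
      have h1 : |∑ k ∈ Finset.Ioc (M ^ 2) N, u k| ≤ ((Finset.Ioc (M ^ 2) N).card : ℝ) := by
        calc |∑ k ∈ Finset.Ioc (M ^ 2) N, u k| ≤ ∑ k ∈ Finset.Ioc (M ^ 2) N, |u k| :=
              Finset.abs_sum_le_sum_abs _ _
          _ ≤ ∑ k ∈ Finset.Ioc (M ^ 2) N, (1:ℝ) := Finset.sum_le_sum fun k _ => hu k
          _ = ((Finset.Ioc (M ^ 2) N).card : ℝ) := by
              rw [Finset.sum_const, nsmul_eq_mul, mul_one]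
      have hcard : (Finset.Ioc (M ^ 2) N).card ≤ 2 * M := by
        rw [Nat.card_Ioc]
        have hp2 : M ^ 2 = M * M := sq M
        have hp3 : (M + 1) * (M + 1) = M * M + 2 * M + 1 := by ring
        omega
      have hcardR : ((Finset.Ioc (M ^ 2) N).card : ℝ) ≤ 2 * M := by exact_mod_cast hcard
      calc |v N| = |v (M ^ 2) + (v N - v (M ^ 2))| := by ring_nf
        _ ≤ |v (M ^ 2)| + |v N - v (M ^ 2)| := abs_add_le _ _
        _ ≤ |v (M ^ 2)| + 2 * M := by rw [hdiff]; linarith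
    have key : |v N| / (N:ℝ) ≤ (|v (M ^ 2)| + 2 * M) / ((M ^ 2 : ℕ) : ℝ) := by
      apply div_le_div₀ (by positivity) habs hM2pos
      exact_mod_cast hMN
    have heq : (|v (M ^ 2)| + 2 * M) / ((M ^ 2 : ℕ) : ℝ)
        = |v (M ^ 2) / ((M ^ 2 : ℕ) : ℝ)| + 2 / (M:ℝ) := by
      rw [abs_div, abs_of_pos hM2pos]
      push_cast
      field_simp
    rw [Real.norm_eq_abs, abs_div, abs_of_pos hNpos]
    rw [heq] at key
    exact key
  · have h2 : Tendsto (fun M : ℕ => 2 / (M:ℝ)) atTop (nhds 0) :=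
      tendsto_const_div_atTop_nhds_zero_nat 2
    have h1 : Tendsto (fun M : ℕ => |v (M ^ 2) / ((M ^ 2 : ℕ) : ℝ)| + 2 / (M:ℝ))
        atTop (nhds 0) := by
      have ha := h.abs
      rw [abs_zero] at ha
      simpa using ha.add h2
    exact h1.comp tendsto_sqrt_atTop

end MLL

namespace MLL2
open MLL

set_option linter.unusedSectionVars false

variable {d : ℕ} (μ : Measure (Fin d → ℝ)) [IsProbabilityMeasure μ]
  (black : ℕ → (Fin d → ℤ) → Bool) (a : ℕ)

lemma W_zero (x : Fin d → ℝ) : S μ black a (0 ^ 2) x / (((0 ^ 2 : ℕ)) : ℝ) = 0 := by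
  simp [S]

lemma abs_W_le_one (M : ℕ) (x : Fin d → ℝ) :
    |S μ black a (M ^ 2) x / (((M ^ 2 : ℕ)) : ℝ)| ≤ 1 := by
  rcases Nat.eq_zero_or_pos M with rfl | hM
  · rw [W_zero]; norm_num
  · have hpos : (0:ℝ) < ((M ^ 2 : ℕ) : ℝ) := by
      have : 0 < M ^ 2 := by positivity
      exact_mod_cast this
    rw [abs_div, abs_of_pos hpos, div_le_one hpos]
    calc |S μ black a (M ^ 2) x| ≤ ((M ^ 2 : ℕ) : ℝ) := abs_S_le μ black a (M ^ 2) x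
      _ = ((M ^ 2 : ℕ) : ℝ) := rfl

lemma integrable_W_sq (M : ℕ) :
    Integrable (fun x => (S μ black a (M ^ 2) x / (((M ^ 2 : ℕ)) : ℝ)) ^ 2) μ := by
  apply (integrable_const (1:ℝ)).mono'
    (((measurable_S μ black a (M ^ 2)).div_const _).pow measurable_const).aestronglyMeasurable
  refine Filter.Eventually.of_forall fun x => ?_
  rw [Real.norm_eq_abs, abs_pow]
  calc |S μ black a (M ^ 2) x / (((M ^ 2 : ℕ)) : ℝ)| ^ 2 ≤ 1 ^ 2 :=
        pow_le_pow_left₀ (abs_nonneg _) (abs_W_le_one μ black a M x) 2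
    _ = 1 := one_pow 2

lemma integral_W_sq_le (M : ℕ) (hM : 1 ≤ M) :
    ∫ x, (S μ black a (M ^ 2) x / (((M ^ 2 : ℕ)) : ℝ)) ^ 2 ∂μ ≤ 2 * a / (M:ℝ) ^ 2 := by
  have hMR : (1:ℝ) ≤ (M:ℝ) := by exact_mod_cast hM
  have hpos : (0:ℝ) < ((M ^ 2 : ℕ) : ℝ) := by push_cast; nlinarith
  have hrw : (fun x => (S μ black a (M ^ 2) x / (((M ^ 2 : ℕ)) : ℝ)) ^ 2)
      = fun x => (S μ black a (M ^ 2) x) ^ 2 * ((((M ^ 2 : ℕ)) : ℝ) ^ 2)⁻¹ := by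
    funext x
    rw [div_pow, div_eq_mul_inv]
  rw [hrw, integral_mul_const]
  have h1 := integral_S_sq_le μ black a (M ^ 2)
  have hinv : (0:ℝ) ≤ ((((M ^ 2 : ℕ)) : ℝ) ^ 2)⁻¹ := by positivity
  calc (∫ x, (S μ black a (M ^ 2) x) ^ 2 ∂μ) * ((((M ^ 2 : ℕ)) : ℝ) ^ 2)⁻¹
      ≤ (2 * a * ((M ^ 2 : ℕ) : ℝ)) * ((((M ^ 2 : ℕ)) : ℝ) ^ 2)⁻¹ :=
        mul_le_mul_of_nonneg_right h1 hinv
    _ = 2 * a / (M:ℝ) ^ 2 := by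
        push_cast
        have hMne : (M:ℝ) ≠ 0 := by linarith
        field_simp

lemma ae_tendsto_S_sq :
    ∀ᵐ x ∂μ, Tendsto (fun M : ℕ => S μ black a (M ^ 2) x / (((M ^ 2 : ℕ)) : ℝ))
      atTop (nhds 0) := by
  set W : ℕ → (Fin d → ℝ) → ℝ := fun M x => S μ black a (M ^ 2) x / (((M ^ 2 : ℕ)) : ℝ)
    with hWdef
  have hmeasW : ∀ M, Measurable (W M) := fun M =>
    (measurable_S μ black a (M ^ 2)).div_const _
  set B : ℕ → ℝ≥0∞ := fun M => ENNReal.ofReal (2 * (a:ℝ) * (1 / (M:ℝ) ^ 2)) with hBdef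
  have hlb : ∀ M, (∫⁻ x, ENNReal.ofReal ((W M x) ^ 2) ∂μ) ≤ B M := by
    intro M
    rcases Nat.eq_zero_or_pos M with rfl | hM
    · have hz : ∀ x, W 0 x = 0 := fun x => W_zero μ black a x
      simp [hz]
    · rw [← ofReal_integral_eq_lintegral_ofReal (integrable_W_sq μ black a M)
        (Filter.Eventually.of_forall fun x => sq_nonneg _)]
      apply ENNReal.ofReal_le_ofReal
      calc ∫ x, (W M x) ^ 2 ∂μ ≤ 2 * a / (M:ℝ) ^ 2 := integral_W_sq_le μ black a M hM
        _ = 2 * (a:ℝ) * (1 / (M:ℝ) ^ 2) := by ring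
  have hsum : (∑' M : ℕ, B M) ≠ ⊤ := by
    have hs0 : Summable (fun M : ℕ => (1:ℝ) / (M:ℝ) ^ 2) :=
      Real.summable_one_div_nat_pow.mpr one_lt_two
    have hs : Summable (fun M : ℕ => 2 * (a:ℝ) * ((1:ℝ) / (M:ℝ) ^ 2)) := hs0.mul_left _
    rw [hBdef, ← ENNReal.ofReal_tsum_of_nonneg (fun M => by positivity) hs]
    exact ENNReal.ofReal_ne_top
  have hlsum : (∫⁻ x, ∑' M : ℕ, ENNReal.ofReal ((W M x) ^ 2) ∂μ) ≠ ⊤ := by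
    rw [lintegral_tsum (fun M =>
      (((hmeasW M).pow measurable_const).ennreal_ofReal).aemeasurable)]
    exact ne_top_of_le_ne_top hsum (ENNReal.tsum_le_tsum hlb)
  have hae := ae_lt_top (Measurable.ennreal_tsum fun M =>
    ((hmeasW M).pow measurable_const).ennreal_ofReal) hlsum
  filter_upwards [hae] with x hx
  have ht : Tendsto (fun M => ENNReal.ofReal ((W M x) ^ 2)) atTop (nhds 0) :=
    ENNReal.tendsto_atTop_zero_of_tsum_ne_top hx.ne
  have ht2 : Tendsto (fun M => (W M x) ^ 2) atTop (nhds 0) := by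
    have hcont := (ENNReal.tendsto_toReal (a := 0) (by simp)).comp ht
    have heq : (fun M => (ENNReal.ofReal ((W M x) ^ 2)).toReal) = fun M => (W M x) ^ 2 := by
      funext M
      rw [ENNReal.toReal_ofReal (sq_nonneg _)]
    rw [show ENNReal.toReal 0 = 0 from rfl] at hcont
    rw [← heq]
    exact hcont
  have ht3 : Tendsto (fun M => |W M x|) atTop (nhds 0) := by
    have hc := (Real.continuous_sqrt.tendsto 0).comp ht2
    have heq : (fun M => Real.sqrt ((W M x) ^ 2)) = fun M => |W M x| := by
      funext M
      rw [Real.sqrt_sq_eq_abs]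
    rw [Real.sqrt_zero] at hc
    rw [← heq]
    exact hc
  exact (tendsto_zero_iff_abs_tendsto_zero _).mpr ht3

end MLL2


/-- **Martingale labeling lemma.** For a Borel probability measure `μ` on
`[0,1)^d`, `a ≥ 1`, and any black/white labeling of dyadic cubes, for
`μ`-a.e. `x`, `(1/N) ∑_{k=1}^N (μ(Q^{k,x}_black)/μ(Q^{k,x}) - 1_{Q^{k,x} black}) → 0`
(terms with `μ(Q^{k,x}) = 0` are interpreted as `0`, which Lean's division
by zero convention provides). -/
theorem martingale_labeling_lemma (d a : ℕ) (hd : 0 < d) (ha : 0 < a)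
    (μ : Measure (Fin d → ℝ)) [IsProbabilityMeasure μ]
    (hsupp : μ {x | ¬ ∀ i, x i ∈ Set.Ico (0 : ℝ) 1} = 0)
    (black : ℕ → (Fin d → ℤ) → Bool) :
    ∀ᵐ x ∂μ,
      Tendsto (fun N : ℕ =>
        (1 / (N : ℝ)) * ∑ k ∈ Finset.Icc 1 N,
          ((μ (blackPart d black a k x)).toReal / (μ (dyadicCube d k x)).toReal
            - if black k (dyadicCorner d k x) then 1 else 0))
        atTop (nhds 0) := by
  classical
  filter_upwards [MLL2.ae_tendsto_S_sq μ black a] with x hx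
  have hsummand : ∀ k : ℕ,
      (μ (blackPart d black a k x)).toReal / (μ (dyadicCube d k x)).toReal
        - (if black k (dyadicCorner d k x) then (1:ℝ) else 0)
      = MLL2.Y μ black a k x + (MLL2.bFun black (k + a) x - MLL2.bFun black k x) := by
    intro k
    rw [MLL2.ratio_eq]
    unfold MLL2.Y MLL2.bFun
    ring
  have hgoal_eq : (fun N : ℕ =>
      (1 / (N : ℝ)) * ∑ k ∈ Finset.Icc 1 N,
        ((μ (blackPart d black a k x)).toReal / (μ (dyadicCube d k x)).toReal
          - if black k (dyadicCorner d k x) then (1:ℝ) else 0))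
      = fun N : ℕ => MLL2.S μ black a N x / (N:ℝ)
          + (∑ k ∈ Finset.Icc 1 N, (MLL2.bFun black (k + a) x - MLL2.bFun black k x)) / (N:ℝ) := by
    funext N
    simp only [hsummand, Finset.sum_add_distrib]
    rw [show MLL2.S μ black a N x = ∑ k ∈ Finset.Icc 1 N, MLL2.Y μ black a k x from rfl]
    ring
  rw [hgoal_eq]
  have h1 : Tendsto (fun N : ℕ => MLL2.S μ black a N x / (N:ℝ)) atTop (nhds 0) := by
    have := MLL.fillin (u := fun k => MLL2.Y μ black a k x)
      (fun k => MLL2.abs_Y_le_one μ black a k x) hx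
    exact this
  have h2 : Tendsto (fun N : ℕ =>
      (∑ k ∈ Finset.Icc 1 N, (MLL2.bFun black (k + a) x - MLL2.bFun black k x)) / (N:ℝ))
      atTop (nhds 0) := by
    apply squeeze_zero_norm' (a := fun N : ℕ => 2 * (a:ℝ) / (N:ℝ))
    · filter_upwards [eventually_ge_atTop 1] with N hN
      have hNpos : (0:ℝ) < (N:ℝ) := by exact_mod_cast hN
      have hg0 : ∀ k, 0 ≤ MLL2.bFun black k x := fun k => by
        rcases MLL2.bFun_mem black k x with h | h <;> rw [h] <;> norm_num
      have hg1 : ∀ k, MLL2.bFun black k x ≤ 1 := fun k => by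
        rcases MLL2.bFun_mem black k x with h | h <;> rw [h] <;> norm_num
      have htel := MLL.telescope_abs_le (fun k => MLL2.bFun black k x) hg0 hg1 a N
      rw [Real.norm_eq_abs, abs_div, abs_of_pos hNpos]
      gcongr

    · have := tendsto_const_div_atTop_nhds_zero_nat (2 * (a:ℝ))
      exact this
  simpa using h1.add h2
end

section
/- Entropy bound via dyadic homogeneity: Let mu be a measure on [0,1)^d, a a positive integer, 0 < epsilon < 2^{-ad-1}, m < d, and suppose that for a fixed cube Q = Q^{k,x} with mu(Q) > 0, the number of generation-(k+a) subcubes Q' of Q with mu(Q') > epsilon * mu(Q) is at most 2^{am}. Then the a-entropy H^a(mu, Q) = sum_{Q' ≺_a Q} phi(mu(Q')/mu(Q)) satisfies H^a(mu, Q) <= (1 - n*epsilon) * log((2^{ad} - n)/(1 - n*epsilon)) + n*epsilon*log(1/epsilon), where n = 2^{ad} - floor(2^{am}) and phi(t) = t log(1/t). -/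
open MeasureTheory Finset
open scoped ENNReal Classical

/-- The generation-`(k+a)` subcube of `Q^{k,x}` with relative position `t`.
The `2^{ad}` subcubes of `Q^{k,x}` are exactly `subcube d a k x t` for
`t : Fin d → Fin (2^a)`. -/
noncomputable def subcube (d a k : ℕ) (x : Fin d → ℝ)
    (t : Fin d → Fin (2 ^ a)) : Set (Fin d → ℝ) :=
  dyadicCube d (k + a)
    (fun i => ((2 ^ a * dyadicCorner d k x i + (t i : ℤ) : ℤ) : ℝ) / 2 ^ (k + a))

/-- generic cube by integer corner -/
def icube (d K : ℕ) (c : Fin d → ℤ) : Set (Fin d → ℝ) :=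
  {y | ∀ i, ⌊(2 : ℝ) ^ K * y i⌋ = c i}

lemma icube_eq_pi (d K : ℕ) (c : Fin d → ℤ) :
    icube d K c = Set.pi Set.univ
      (fun i => Set.Ico ((c i : ℝ) / 2 ^ K) (((c i : ℝ) + 1) / 2 ^ K)) := by
  ext y
  simp only [icube, Set.mem_setOf_eq, Set.mem_pi, Set.mem_univ, Set.mem_Ico, forall_true_left]
  refine forall_congr' fun i => ?_
  rw [Int.floor_eq_iff, div_le_iff₀ (by positivity), lt_div_iff₀ (by positivity)]
  constructor <;> rintro ⟨h1, h2⟩ <;> constructor <;> nlinarith [pow_pos (by norm_num : (0:ℝ) < 2) K]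

lemma icube_measurable (d K : ℕ) (c : Fin d → ℤ) : MeasurableSet (icube d K c) := by
  rw [icube_eq_pi]
  exact MeasurableSet.univ_pi fun i => measurableSet_Ico

lemma icube_measure_lt_top (d K : ℕ) (c : Fin d → ℤ) (μ : Measure (Fin d → ℝ))
    [IsLocallyFiniteMeasure μ] : μ (icube d K c) < ∞ := by
  have hsub : icube d K c ⊆ Set.pi Set.univ
      (fun i => Set.Icc ((c i : ℝ) / 2 ^ K) (((c i : ℝ) + 1) / 2 ^ K)) := by
    rw [icube_eq_pi]
    exact Set.pi_mono fun i _ => Set.Ico_subset_Icc_self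
  have hcomp : IsCompact (Set.pi Set.univ
      (fun i : Fin d => Set.Icc ((c i : ℝ) / 2 ^ K) (((c i : ℝ) + 1) / 2 ^ K))) :=
    isCompact_univ_pi fun i => isCompact_Icc
  exact lt_of_le_of_lt (measure_mono hsub) hcomp.measure_lt_top

lemma floor_pow_div (K a : ℕ) (y : ℝ) :
    ⌊(2 : ℝ) ^ K * y⌋ = ⌊(2 : ℝ) ^ (K + a) * y⌋ / 2 ^ a := by
  set e : ℤ := ⌊(2 : ℝ) ^ (K + a) * y⌋ with he
  have hb : (0:ℤ) < 2 ^ a := by positivity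
  have hde : 2 ^ a * (e / 2 ^ a) + e % 2 ^ a = e := Int.mul_ediv_add_emod e (2 ^ a)
  have hr0 : (0:ℤ) ≤ e % 2 ^ a := Int.emod_nonneg e (by positivity)
  have hr1 : e % 2 ^ a < 2 ^ a := Int.emod_lt_of_pos e hb
  have h1 : (e : ℝ) ≤ (2 : ℝ) ^ (K + a) * y := Int.floor_le _
  have h2 : (2 : ℝ) ^ (K + a) * y < e + 1 := Int.lt_floor_add_one _
  have hpow : (2 : ℝ) ^ (K + a) = 2 ^ K * 2 ^ a := pow_add 2 K a
  rw [Int.floor_eq_iff]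
  have h2a : (0:ℝ) < 2 ^ a := by positivity
  constructor
  · have hZ : (2:ℤ) ^ a * (e / 2 ^ a) ≤ e := by linarith
    have hR : ((2:ℝ)) ^ a * ((e / 2 ^ a : ℤ) : ℝ) ≤ (e:ℝ) := by exact_mod_cast hZ
    rw [← mul_le_mul_iff_right₀ h2a]
    calc (2:ℝ) ^ a * ((e / 2 ^ a : ℤ) : ℝ) ≤ (e:ℝ) := hR
      _ ≤ 2 ^ (K + a) * y := h1
      _ = 2 ^ a * (2 ^ K * y) := by rw [hpow]; ring
  · have hZ : e + 1 ≤ (2:ℤ) ^ a * (e / 2 ^ a + 1) := by rw [mul_add, mul_one]; linarith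
    have hR : (e:ℝ) + 1 ≤ (2:ℝ) ^ a * (((e / 2 ^ a : ℤ) : ℝ) + 1) := by exact_mod_cast hZ
    rw [← mul_lt_mul_iff_right₀ h2a]
    calc (2:ℝ) ^ a * (2 ^ K * y) = 2 ^ (K + a) * y := by rw [hpow]; ring
      _ < (e:ℝ) + 1 := h2
      _ ≤ 2 ^ a * (((e / 2 ^ a : ℤ) : ℝ) + 1) := hR

lemma dyadicCube_eq_icube (d k : ℕ) (x : Fin d → ℝ) :
    dyadicCube d k x = icube d k (dyadicCorner d k x) := rfl

lemma subcube_eq_icube (d a k : ℕ) (x : Fin d → ℝ) (t : Fin d → Fin (2 ^ a)) :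
    subcube d a k x t
      = icube d (k + a) (fun i => 2 ^ a * dyadicCorner d k x i + (t i : ℤ)) := by
  unfold subcube dyadicCube icube
  ext y
  simp only [Set.mem_setOf_eq]
  refine forall_congr' fun i => ?_
  have hne : ((2:ℝ) ^ (k + a)) ≠ 0 := by positivity
  have : (2:ℝ) ^ (k + a) *
      (((2 ^ a * dyadicCorner d k x i + (t i : ℤ) : ℤ) : ℝ) / 2 ^ (k + a))
      = ((2 ^ a * dyadicCorner d k x i + (t i : ℤ) : ℤ) : ℝ) := by
    field_simp
  rw [this, Int.floor_intCast]

lemma iUnion_subcube (d a k : ℕ) (x : Fin d → ℝ) :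
    (⋃ t : Fin d → Fin (2 ^ a), subcube d a k x t) = dyadicCube d k x := by
  ext y
  simp only [Set.mem_iUnion, subcube_eq_icube, dyadicCube_eq_icube, icube, Set.mem_setOf_eq]
  have hb : (0:ℤ) < 2 ^ a := by positivity
  constructor
  · rintro ⟨t, ht⟩ i
    rw [floor_pow_div k a (y i), ht i]
    have ht0 : (0:ℤ) ≤ (t i : ℤ) := Int.natCast_nonneg _
    have ht1 : ((t i : ℤ)) < 2 ^ a := by exact_mod_cast (t i).isLt
    rw [add_comm, Int.add_mul_ediv_left _ _ (ne_of_gt hb),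
      Int.ediv_eq_zero_of_lt ht0 ht1, zero_add]
  · intro hy
    refine ⟨fun i => ⟨(⌊(2:ℝ) ^ (k + a) * y i⌋ % 2 ^ a).toNat, ?_⟩, fun i => ?_⟩
    · have := Int.emod_lt_of_pos ⌊(2:ℝ) ^ (k + a) * y i⌋ hb
      have h0 := Int.emod_nonneg ⌊(2:ℝ) ^ (k + a) * y i⌋ (ne_of_gt hb)
      have hcast : ((2:ℤ) ^ a) = ((2 ^ a : ℕ) : ℤ) := by push_cast; ring
      omega
    · have hde := Int.mul_ediv_add_emod ⌊(2:ℝ) ^ (k + a) * y i⌋ (2 ^ a)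
      have hdiv : ⌊(2:ℝ) ^ (k + a) * y i⌋ / 2 ^ a = dyadicCorner d k x i := by
        rw [← floor_pow_div k a (y i)]; exact hy i
      have h0 := Int.emod_nonneg ⌊(2:ℝ) ^ (k + a) * y i⌋ (ne_of_gt hb)
      simp only
      rw [Int.toNat_of_nonneg h0, ← hdiv]
      linarith [hde]

lemma disjoint_subcube (d a k : ℕ) (x : Fin d → ℝ) :
    Pairwise (Function.onFun Disjoint (subcube d a k x)) := by
  intro t t' htt'
  simp only [Function.onFun, Set.disjoint_left, subcube_eq_icube, icube, Set.mem_setOf_eq]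
  intro y hy hy'
  apply htt'
  funext i
  have h1 := hy i
  have h2 := hy' i
  have : ((t i : ℤ)) = ((t' i : ℤ)) := by omega
  exact Fin.ext (by exact_mod_cast this)

lemma measure_dyadicCube_eq_sum (d a k : ℕ) (x : Fin d → ℝ) (μ : Measure (Fin d → ℝ)) :
    μ (dyadicCube d k x) = ∑ t : Fin d → Fin (2 ^ a), μ (subcube d a k x t) := by
  rw [← iUnion_subcube d a k x,
    measure_iUnion (disjoint_subcube d a k x)
      (fun t => by rw [subcube_eq_icube]; exact icube_measurable _ _ _),
    tsum_fintype]

lemma gibbs {ι : Type*} [Fintype ι] (p q : ι → ℝ) (hp : ∀ i, 0 ≤ p i)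
    (hq : ∀ i, 0 < q i) (hps : ∑ i, p i = 1) (hqs : ∑ i, q i = 1) :
    ∑ i, p i * Real.logb 2 (p i)⁻¹ ≤ ∑ i, p i * Real.logb 2 (q i)⁻¹ := by
  have hlog2 : (0:ℝ) < Real.log 2 := Real.log_pos (by norm_num)
  have key : ∀ i, p i * Real.logb 2 (p i)⁻¹
      ≤ p i * Real.logb 2 (q i)⁻¹ + (q i - p i) / Real.log 2 := by
    intro i
    rcases eq_or_lt_of_le (hp i) with h0 | h0
    · rw [← h0]
      simp only [zero_mul, sub_zero, zero_add]
      exact div_nonneg (hq i).le hlog2.le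
    · have hqi := hq i
      have hlogle : Real.log (q i / p i) ≤ q i / p i - 1 :=
        Real.log_le_sub_one_of_pos (by positivity)
      have hexp : Real.logb 2 (p i)⁻¹ - Real.logb 2 (q i)⁻¹
          = Real.log (q i / p i) / Real.log 2 := by
        unfold Real.logb
        rw [Real.log_inv, Real.log_inv, Real.log_div (ne_of_gt hqi) (ne_of_gt h0)]
        ring
      have hmul : p i * Real.log (q i / p i) ≤ q i - p i := by
        have := mul_le_mul_of_nonneg_left hlogle (le_of_lt h0)
        calc p i * Real.log (q i / p i) ≤ p i * (q i / p i - 1) := this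
          _ = q i - p i := by field_simp
      have : p i * (Real.logb 2 (p i)⁻¹ - Real.logb 2 (q i)⁻¹)
          ≤ (q i - p i) / Real.log 2 := by
        rw [hexp, mul_div_assoc']
        exact div_le_div_of_nonneg_right hmul hlog2.le
      linarith
  calc ∑ i, p i * Real.logb 2 (p i)⁻¹
      ≤ ∑ i, (p i * Real.logb 2 (q i)⁻¹ + (q i - p i) / Real.log 2) :=
        Finset.sum_le_sum fun i _ => key i
    _ = ∑ i, p i * Real.logb 2 (q i)⁻¹ + (∑ i, q i - ∑ i, p i) / Real.log 2 := by
        rw [Finset.sum_add_distrib, ← Finset.sum_div, Finset.sum_sub_distrib]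
    _ = ∑ i, p i * Real.logb 2 (q i)⁻¹ := by rw [hps, hqs]; simp

/-- **Entropy bound via dyadic homogeneity.** If at most `2^{am}` of the
`2^{ad}` generation-`(k+a)` subcubes `Q'` of `Q = Q^{k,x}` satisfy
`μ(Q') > ε μ(Q)`, where `0 < ε < 2^{-ad-1}` and `m < d`, then
`H^a(μ,Q) = ∑_{Q' ≺_a Q} φ(μ(Q')/μ(Q)) ≤
(1 - nε) log((2^{ad} - n)/(1 - nε)) + nε log(1/ε)`, with
`n = 2^{ad} - ⌊2^{am}⌋` and `φ(t) = t log(1/t)` (log base 2). -/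
theorem entropy_bound_via_dyadic_homogeneity (d a k : ℕ) (hd : 0 < d)
    (ha : 0 < a) (m : ℝ) (hm0 : 0 < m) (hm : m < d)
    (ε : ℝ) (hε : 0 < ε) (hε2 : ε < ((2 : ℝ) ^ (a * d + 1))⁻¹)
    (μ : Measure (Fin d → ℝ)) [IsLocallyFiniteMeasure μ]
    (x : Fin d → ℝ) (hQ : μ (dyadicCube d k x) ≠ 0)
    (hhom : ((Finset.univ.filter (fun t : Fin d → Fin (2 ^ a) =>
        ε * (μ (dyadicCube d k x)).toReal <
          (μ (subcube d a k x t)).toReal)).card : ℝ) ≤ (2 : ℝ) ^ ((a : ℝ) * m))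
    (n : ℕ) (hn : n = 2 ^ (a * d) - ⌊(2 : ℝ) ^ ((a : ℝ) * m)⌋₊) :
    (∑ t : Fin d → Fin (2 ^ a),
        ((μ (subcube d a k x t)).toReal / (μ (dyadicCube d k x)).toReal) *
          Real.logb 2
            (((μ (subcube d a k x t)).toReal /
              (μ (dyadicCube d k x)).toReal)⁻¹)) ≤
      (1 - n * ε) * Real.logb 2 (((2 : ℝ) ^ (a * d) - n) / (1 - n * ε))
        + n * ε * Real.logb 2 (1 / ε) := by
  -- basic facts on the measure of Q
  have hQtop : μ (dyadicCube d k x) ≠ ∞ := by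
    rw [dyadicCube_eq_icube]; exact (icube_measure_lt_top _ _ _ μ).ne
  have hQpos : 0 < (μ (dyadicCube d k x)).toReal := ENNReal.toReal_pos hQ hQtop
  set p : (Fin d → Fin (2 ^ a)) → ℝ :=
    fun t => (μ (subcube d a k x t)).toReal / (μ (dyadicCube d k x)).toReal with hpdef
  have hp0 : ∀ t, 0 ≤ p t := fun t => by positivity
  have hsum : ∑ t : Fin d → Fin (2 ^ a), (μ (subcube d a k x t)).toReal
      = (μ (dyadicCube d k x)).toReal := by
    rw [measure_dyadicCube_eq_sum d a k x μ, ENNReal.toReal_sum]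
    intro t _
    rw [subcube_eq_icube]
    exact (icube_measure_lt_top _ _ _ μ).ne
  have hps : ∑ t, p t = 1 := by
    rw [hpdef, ← Finset.sum_div, hsum, div_self (ne_of_gt hQpos)]
  -- combinatorial counting
  set M : ℕ := 2 ^ (a * d) with hM
  have hcard : Fintype.card (Fin d → Fin (2 ^ a)) = M := by
    simp [Fintype.card_fun, hM, pow_mul]
  set A : Finset (Fin d → Fin (2 ^ a)) := Finset.univ.filter
    (fun t => ε * (μ (dyadicCube d k x)).toReal < (μ (subcube d a k x t)).toReal) with hA
  have hAcard : A.card ≤ ⌊(2 : ℝ) ^ ((a : ℝ) * m)⌋₊ := Nat.le_floor hhom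
  have hfl1 : 1 ≤ ⌊(2 : ℝ) ^ ((a : ℝ) * m)⌋₊ := by
    apply Nat.le_floor
    norm_num
    exact Real.one_le_rpow (by norm_num) (by positivity)
  have hnM : n ≤ M := by omega
  have hMn1 : 1 ≤ M - n := by
    have : (1:ℕ) ≤ M := Nat.one_le_two_pow
    omega
  have hAc : n ≤ Aᶜ.card := by
    rw [Finset.card_compl, hcard]
    omega
  obtain ⟨B, hBsub, hBcard⟩ := Finset.exists_subset_card_eq hAc
  -- real versions of the counting facts
  have hMR : ((M:ℕ):ℝ) = (2:ℝ) ^ (a * d) := by push_cast [hM]; ring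
  have hMnR : ((M - n : ℕ) : ℝ) = (2:ℝ) ^ (a * d) - n := by
    push_cast [Nat.cast_sub hnM, hMR]
    ring
  have hMnR1 : (1:ℝ) ≤ (2:ℝ) ^ (a * d) - n := by
    rw [← hMnR]; exact_mod_cast hMn1
  have hnε : (n:ℝ) * ε < 1 / 2 := by
    have h1 : (n:ℝ) ≤ (2:ℝ) ^ (a * d) := by
      have : ((n:ℕ):ℝ) ≤ ((M:ℕ):ℝ) := by exact_mod_cast hnM
      rwa [hMR] at this
    have h2 : (n:ℝ) * ε ≤ (2:ℝ) ^ (a * d) * ε :=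
      mul_le_mul_of_nonneg_right h1 hε.le
    have h3 : (2:ℝ) ^ (a * d) * ε < (2:ℝ) ^ (a * d) * ((2 : ℝ) ^ (a * d + 1))⁻¹ :=
      mul_lt_mul_of_pos_left hε2 (by positivity)
    have h4 : (2:ℝ) ^ (a * d) * ((2 : ℝ) ^ (a * d + 1))⁻¹ = 1 / 2 := by
      rw [pow_succ]
      field_simp
    linarith
  have h1nε : (0:ℝ) < 1 - n * ε := by linarith
  set c : ℝ := (1 - n * ε) / ((2:ℝ) ^ (a * d) - n) with hc
  have hcpos : 0 < c := by
    apply div_pos h1nε; linarith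
  have hεc : ε ≤ c := by
    have : ((2 : ℝ) ^ (a * d + 1))⁻¹ = (1/2) / (2:ℝ) ^ (a * d) := by
      rw [pow_succ]; field_simp
    have h5 : (1/2 : ℝ) / (2:ℝ) ^ (a * d) ≤ c := by
      rw [hc]
      apply div_le_div₀ (by linarith) (by linarith) (by linarith)
      have : (0:ℝ) ≤ (n:ℝ) := Nat.cast_nonneg n
      linarith
    linarith [hε2.le.trans (le_of_eq this) |>.trans h5]
  -- the comparison density q
  set q : (Fin d → Fin (2 ^ a)) → ℝ := fun t => if t ∈ B then ε else c with hqdef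
  have hq0 : ∀ t, 0 < q t := by
    intro t; rw [hqdef]; dsimp only; split <;> [exact hε; exact hcpos]
  have hBc : Bᶜ.card = M - n := by
    rw [Finset.card_compl, hcard, hBcard]
  have hqs : ∑ t, q t = 1 := by
    rw [← Finset.sum_add_sum_compl B]
    have e1 : ∑ t ∈ B, q t = n * ε := by
      rw [Finset.sum_congr rfl (fun t ht => if_pos ht), Finset.sum_const, hBcard,
        nsmul_eq_mul]
    have e2 : ∑ t ∈ Bᶜ, q t = ((2:ℝ) ^ (a * d) - n) * c := by
      rw [Finset.sum_congr rfl (fun t ht => if_neg (Finset.mem_compl.mp ht)),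
        Finset.sum_const, hBc, nsmul_eq_mul, hMnR]
    rw [e1, e2, hc]
    field_simp
    ring
  -- apply Gibbs
  have hgibbs := gibbs p q hp0 hq0 hps hqs
  refine le_trans hgibbs ?_
  -- compute the RHS of Gibbs
  have hpB : ∀ t ∈ B, p t ≤ ε := by
    intro t ht
    have htA : t ∉ A := Finset.mem_compl.mp (hBsub ht)
    rw [hA, Finset.mem_filter] at htA
    push_neg at htA
    have := htA (Finset.mem_univ t)
    rw [hpdef]
    exact (div_le_iff₀ hQpos).mpr this
  set P : ℝ := ∑ t ∈ B, p t with hP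
  have hPle : P ≤ (n:ℝ) * ε := by
    rw [hP]
    calc ∑ t ∈ B, p t ≤ ∑ t ∈ B, ε := Finset.sum_le_sum hpB
      _ = n * ε := by rw [Finset.sum_const, hBcard, nsmul_eq_mul]
  have hP0 : 0 ≤ P := Finset.sum_nonneg fun t _ => hp0 t
  have hsplit : ∑ t, p t * Real.logb 2 (q t)⁻¹
      = P * Real.logb 2 ε⁻¹ + (1 - P) * Real.logb 2 c⁻¹ := by
    rw [← Finset.sum_add_sum_compl B]
    have e1 : ∑ t ∈ B, p t * Real.logb 2 (q t)⁻¹ = P * Real.logb 2 ε⁻¹ := by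
      rw [hP, Finset.sum_mul]
      exact Finset.sum_congr rfl fun t ht => by rw [hqdef]; dsimp only; rw [if_pos ht]
    have e2 : ∑ t ∈ Bᶜ, p t * Real.logb 2 (q t)⁻¹ = (1 - P) * Real.logb 2 c⁻¹ := by
      have : ∑ t ∈ Bᶜ, p t = 1 - P := by
        have := Finset.sum_add_sum_compl B p
        rw [hps] at this
        linarith [this]
      rw [← this, Finset.sum_mul]
      exact Finset.sum_congr rfl fun t ht => by
        rw [hqdef]; dsimp only; rw [if_neg (Finset.mem_compl.mp ht)]
    rw [e1, e2]
  rw [hsplit]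
  -- monotonicity step
  have hLc : Real.logb 2 c⁻¹ ≤ Real.logb 2 ε⁻¹ := by
    apply Real.logb_le_logb_of_le (by norm_num) (by positivity)
    exact inv_anti₀ hε hεc
  have hfin : P * Real.logb 2 ε⁻¹ + (1 - P) * Real.logb 2 c⁻¹
      ≤ (n:ℝ) * ε * Real.logb 2 ε⁻¹ + (1 - n * ε) * Real.logb 2 c⁻¹ := by
    nlinarith [mul_nonneg (sub_nonneg.mpr hPle) (sub_nonneg.mpr hLc)]
  refine hfin.trans (le_of_eq ?_)
  have hcinv : c⁻¹ = ((2:ℝ) ^ (a * d) - n) / (1 - n * ε) := by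
    rw [hc, inv_div]
  rw [hcinv, one_div]
  ring
end
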